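/- Let A be a Krull–Schmidt category and let C = (X_•, d_•) be a complex in A such that d_i ∉ rad_A(X_i, X_{i+1}) for some i. Then there exist a non-zero indecomposable object M of A and objects B_i, B_{i+1} with X_i ≅ B_i ⊕ M and X_{i+1} ≅ B_{i+1} ⊕ M, such that C is isomorphic in the category of complexes over A to a direct sum C′ ⊕ C″, where C″ is the complex ⋯ → 0 → M → M → 0 → ⋯ with the identity differential and M placed in degrees i and i+1, and C′ agrees with C in all degrees other than i and i+1 and has terms B_i and B_{i+1} in degrees i and i+1. In particular, C is homotopy equivalent to C′. -/

import Mathlib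

open CategoryTheory CategoryTheory.Limits

universe w v u

/-- A morphism `f : X ⟶ Y` in a preadditive category lies in the *radical* if for every
object `Z` and all morphisms `a : Z ⟶ X`, `b : Y ⟶ Z`, the composite `a ≫ f ≫ b` lies in the
Jacobson radical of the endomorphism ring `End Z`. -/
def CategoryTheory.InRadical {A : Type u} [Category.{v} A] [Preadditive A]
    {X Y : A} (f : X ⟶ Y) : Prop :=
  ∀ (Z : A) (a : Z ⟶ X) (b : Y ⟶ Z), (a ≫ f ≫ b : End Z) ∈ (⊥ : Ideal (End Z)).jacobson

/-- A cochain complex is *minimal* if all its differentials lie in the radical. -/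
def CochainComplex.IsMinimal {A : Type u} [Category.{v} A] [Preadditive A]
    (K : CochainComplex A ℤ) : Prop :=
  ∀ i : ℤ, CategoryTheory.InRadical (K.d i (i + 1))


attribute [local instance] CategoryTheory.Limits.hasBinaryBiproducts_of_finite_biproducts
attribute [local instance] CategoryTheory.Limits.HasBinaryBiproducts.of_hasBinaryProducts

/-- A preadditive category with finite biproducts is *Krull–Schmidt* if every object is
isomorphic to a finite biproduct of objects whose endomorphism rings are local. -/
def CategoryTheory.IsKrullSchmidt (A : Type u) [Category.{v} A] [Preadditive A]
    [HasFiniteBiproducts A] : Prop :=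
  ∀ X : A, ∃ (n : ℕ) (Y : Fin n → A),
    Nonempty (X ≅ ⨁ Y) ∧ ∀ i, IsLocalRing (End (Y i))


/-! A non-radical differential `d : C.X i ⟶ C.X (i + 1)` has, after decomposing source and target
into objects with local endomorphism rings, a component `M ⟶ N` outside the radical, and a map
between such objects is outside the radical only if it is an isomorphism. Gaussian elimination of
the resulting `2 × 2` block matrix rewrites `d` as `𝟙 M ⊕ g`. Since `d` composes to zero with the
neighbouring differentials, they neither leave nor reach the copies of `M`; so every differential of
`C` is block diagonal, and `C` is the biproduct of the contractible complex `M ⟶ M` and the complex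
of the complementary blocks. -/

theorem IsLocalRing.eq_zero_or_eq_one_of_isIdempotentElem {R : Type*} [Ring R] [IsLocalRing R]
    {e : R} (he : IsIdempotentElem e) : e = 0 ∨ e = 1 := by
  rcases IsLocalRing.isUnit_or_isUnit_of_add_one (add_sub_cancel e 1) with hu | hu
  · exact Or.inr ((IsIdempotentElem.iff_eq_one_of_isUnit hu).mp he)
  · exact Or.inl (sub_eq_self.mp ((IsIdempotentElem.iff_eq_one_of_isUnit hu).mp he.one_sub))

theorem IsLocalRing.isUnit_one_add_of_not_isUnit {R : Type*} [Ring R] [IsLocalRing R]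
    {x : R} (hx : ¬ IsUnit x) : IsUnit (1 + x) :=
  (IsLocalRing.isUnit_or_isUnit_of_add_one (add_neg_cancel_right 1 x)).resolve_right
    (by rwa [IsUnit.neg_iff])

namespace CategoryTheory

variable {A : Type u} [Category.{v} A] [Preadditive A]

section LocalObjects

theorem isIso_of_isIso_comp_of_isLocalRing {M N : A} [Nontrivial (End M)] [IsLocalRing (End N)]
    (f : M ⟶ N) (g : N ⟶ M) [IsIso (f ≫ g)] : IsIso f := by
  set r := g ≫ inv (f ≫ g)
  have hfr : f ≫ r = 𝟙 M := by rw [← Category.assoc, IsIso.hom_inv_id]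
  have hidem : IsIdempotentElem (M := End N) (r ≫ f) := by
    change (r ≫ f) ≫ r ≫ f = r ≫ f
    rw [Category.assoc, reassoc_of% hfr]
  rcases IsLocalRing.eq_zero_or_eq_one_of_isIdempotentElem hidem with h0 | h1
  · refine absurd ?_ (one_ne_zero (α := End M))
    calc 𝟙 M = (f ≫ r) ≫ f ≫ r := by rw [hfr, Category.id_comp]
      _ = f ≫ (r ≫ f) ≫ r := by simp only [Category.assoc]
      _ = 0 := by rw [show r ≫ f = 0 from h0]; simp
  · exact ⟨r, hfr, h1⟩

theorem indecomposable_of_isLocalRing [HasBinaryBiproducts A] {M : A} [IsLocalRing (End M)] :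
    Indecomposable M := by
  refine ⟨fun hM => one_ne_zero (α := End M) (hM.eq_of_src _ _), fun Y Z u => ?_⟩
  let e : End M := u.hom ≫ biprod.fst ≫ biprod.inl ≫ u.inv
  have he : IsIdempotentElem e := by simp [e, IsIdempotentElem, End.mul_def]
  rcases IsLocalRing.eq_zero_or_eq_one_of_isIdempotentElem he with h0 | h1
  · refine Or.inl ((IsZero.iff_id_eq_zero Y).mpr ?_)
    calc 𝟙 Y = biprod.inl ≫ u.inv ≫ e ≫ u.hom ≫ biprod.fst := by simp [e]
      _ = 0 := by rw [h0]; simp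
  · refine Or.inr ((IsZero.iff_id_eq_zero Z).mpr ?_)
    calc 𝟙 Z = biprod.inr ≫ u.inv ≫ e ≫ u.hom ≫ biprod.snd := by rw [h1]; simp
      _ = 0 := by simp [e]

end LocalObjects

section Radical

theorem InRadical.zero {X Y : A} : InRadical (0 : X ⟶ Y) := fun Z a b => by
  simp

theorem InRadical.add {X Y : A} {f g : X ⟶ Y} (hf : InRadical f) (hg : InRadical g) :
    InRadical (f + g) := fun Z a b => by
  simpa [Preadditive.add_comp, Preadditive.comp_add] using
    (⊥ : Ideal (End Z)).jacobson.add_mem (hf Z a b) (hg Z a b)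

theorem InRadical.sum {X Y : A} {ι : Type*} (s : Finset ι) {f : ι → (X ⟶ Y)}
    (hf : ∀ j ∈ s, InRadical (f j)) : InRadical (∑ j ∈ s, f j) :=
  Finset.sum_induction f InRadical (fun _ _ => InRadical.add) InRadical.zero hf

theorem InRadical.comp_left {W X Y : A} {f : X ⟶ Y} (hf : InRadical f) (p : W ⟶ X) :
    InRadical (p ≫ f) := fun Z a b => by
  simpa using hf Z (a ≫ p) b

theorem InRadical.comp_right {X Y W : A} {f : X ⟶ Y} (hf : InRadical f) (q : Y ⟶ W) :
    InRadical (f ≫ q) := fun Z a b => by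
  simpa using hf Z a (q ≫ b)

theorem InRadical.of_components {J K : Type} [Fintype J] [Fintype K] {P : J → A} {Q : K → A}
    [HasBiproduct P] [HasBiproduct Q] {f : ⨁ P ⟶ ⨁ Q}
    (hf : ∀ j k, InRadical (biproduct.ι P j ≫ f ≫ biproduct.π Q k)) : InRadical f := by
  have hsum : f = ∑ j, ∑ k,
      biproduct.π P j ≫ (biproduct.ι P j ≫ f ≫ biproduct.π Q k) ≫ biproduct.ι Q k := by
    conv_lhs => rw [← Category.id_comp f, ← Category.comp_id f, ← biproduct.total,
      ← biproduct.total]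
    simp only [Preadditive.sum_comp, Preadditive.comp_sum, Category.assoc]
    exact Finset.sum_comm
  rw [hsum]
  exact InRadical.sum _ fun j _ => InRadical.sum _ fun k _ =>
    by simpa using ((hf j k).comp_right (biproduct.ι Q k)).comp_left (biproduct.π P j)

theorem id_add_comp_comp_id_sub {Z M : A} (p : Z ⟶ M) (q : M ⟶ Z) {w : M ⟶ M}
    (hw : (𝟙 M + q ≫ p) ≫ w = 𝟙 M) : (𝟙 Z + p ≫ q) ≫ (𝟙 Z - p ≫ w ≫ q) = 𝟙 Z := by
  have hw' : q ≫ p ≫ w = 𝟙 M - w := by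
    rw [← hw]; simp [Preadditive.add_comp]
  simp only [Preadditive.add_comp, Preadditive.comp_sub, Category.id_comp, Category.comp_id,
    Category.assoc, reassoc_of% hw', Preadditive.sub_comp, Preadditive.comp_sub]
  abel

theorem inRadical_of_not_isIso {M N : A} [IsLocalRing (End M)] [IsLocalRing (End N)]
    {f : M ⟶ N} (hf : ¬ IsIso f) : InRadical f := by
  refine fun Z a b => (Ideal.mem_jacobson_iff (R := End Z)).mpr fun y => ?_
  set q := f ≫ b ≫ y
  have hqa : ¬ IsUnit (M := End M) (q ≫ a) := by
    rw [isUnit_iff_isIso]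
    intro h
    have : IsIso (f ≫ b ≫ y ≫ a) := by simpa [q] using h
    exact hf (isIso_of_isIso_comp_of_isLocalRing f (b ≫ y ≫ a))
  obtain ⟨w, hw⟩ : ∃ w : M ⟶ M, (𝟙 M + q ≫ a) ≫ w = 𝟙 M :=
    ⟨_, (IsLocalRing.isUnit_one_add_of_not_isUnit hqa).unit.inv_val⟩
  -- in `End Z` the product `z * y * x` is the composite `x ≫ y ≫ z`
  refine ⟨𝟙 Z - a ≫ w ≫ q, (Ideal.mem_bot (R := End Z)).mpr ?_⟩
  change (a ≫ f ≫ b) ≫ y ≫ (𝟙 Z - a ≫ w ≫ q) + (𝟙 Z - a ≫ w ≫ q) - 𝟙 Z = 0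
  rw [sub_eq_zero]
  refine Eq.trans ?_ (id_add_comp_comp_id_sub a q hw)
  simp only [Preadditive.add_comp, Category.id_comp, Category.assoc, q]
  abel

theorem isIso_of_not_inRadical {M N : A} [IsLocalRing (End M)] [IsLocalRing (End N)]
    {f : M ⟶ N} (hf : ¬ InRadical f) : IsIso f := by
  by_contra h
  exact hf (inRadical_of_not_isIso h)

end Radical

section Biproducts

@[simps]
noncomputable def Limits.biproduct.isoBiprodRestrictNe [HasFiniteBiproducts A] {J : Type}
    [Fintype J] [DecidableEq J] (P : J → A) (k : J) :
    ⨁ P ≅ P k ⊞ ⨁ Subtype.restrict (· ≠ k) P where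
  hom := biprod.lift (biproduct.π P k) (biproduct.toSubtype P _)
  inv := biprod.desc (biproduct.ι P k) (biproduct.fromSubtype P _)
  hom_inv_id := by
    ext j j'
    by_cases hj : j = k
    · subst hj
      simp [biproduct.ι_π]
    · simp [biproduct.ι_π, hj, Ne.symm hj]
  inv_hom_id := by
    apply biprod.hom_ext' <;> apply biprod.hom_ext <;> simp

theorem Biprod.exists_iso_comp_comp_eq_biprod_map_id [HasBinaryBiproducts A] {X₁ X₂ Y₁ Y₂ : A}
    (f : X₁ ⊞ X₂ ⟶ Y₁ ⊞ Y₂) [IsIso (biprod.inl ≫ f ≫ biprod.fst)] :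
    ∃ (L : X₁ ⊞ X₂ ≅ X₁ ⊞ X₂) (R : Y₁ ⊞ Y₂ ≅ X₁ ⊞ Y₂) (g : X₂ ⟶ Y₂),
      L.hom ≫ f ≫ R.hom = biprod.map (𝟙 X₁) g := by
  obtain ⟨L, R, g, hw⟩ := Biprod.gaussian f
  refine ⟨L, R ≪≫ biprod.mapIso (asIso (biprod.inl ≫ f ≫ biprod.fst)).symm (Iso.refl _), g, ?_⟩
  simp only [Iso.trans_hom, biprod.mapIso_hom, reassoc_of% hw]
  ext <;> simp

theorem exists_iso_biprod_diagonal_of_not_inRadical [HasFiniteBiproducts A]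
    (hKS : IsKrullSchmidt A) {X Y : A} {f : X ⟶ Y} (hf : ¬ InRadical f) :
    ∃ (M B₀ B₁ : A) (U : X ≅ M ⊞ B₀) (V : Y ≅ M ⊞ B₁) (g : B₀ ⟶ B₁),
      IsLocalRing (End M) ∧ U.inv ≫ f ≫ V.hom = biprod.map (𝟙 M) g := by
  obtain ⟨n, P, ⟨eX⟩, hP⟩ := hKS X
  obtain ⟨m, Q, ⟨eY⟩, hQ⟩ := hKS Y
  obtain ⟨k, l, hkl⟩ :
      ∃ k l, ¬ InRadical (biproduct.ι P k ≫ eX.inv ≫ f ≫ eY.hom ≫ biproduct.π Q l) := by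
    by_contra! h
    have hcomp := InRadical.of_components (f := eX.inv ≫ f ≫ eY.hom) (by simpa using h)
    exact hf (by simpa using (hcomp.comp_left eX.hom).comp_right eY.inv)
  have := hP k
  have := hQ l
  let U₀ := eX ≪≫ biproduct.isoBiprodRestrictNe P k
  let V₀ := eY ≪≫ biproduct.isoBiprodRestrictNe Q l
  have : IsIso (biprod.inl ≫ (U₀.inv ≫ f ≫ V₀.hom) ≫ biprod.fst) := by
    simpa [U₀, V₀] using isIso_of_not_inRadical hkl
  obtain ⟨L, R, g, hw⟩ := Biprod.exists_iso_comp_comp_eq_biprod_map_id (U₀.inv ≫ f ≫ V₀.hom)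
  exact ⟨P k, _, _, U₀ ≪≫ L.symm, V₀ ≪≫ R, g, hP k, by simpa using hw⟩

def Biprod.IsDiagonal [HasBinaryBiproducts A] {X₁ X₂ Y₁ Y₂ : A} (f : X₁ ⊞ X₂ ⟶ Y₁ ⊞ Y₂) :
    Prop :=
  biprod.inl ≫ f ≫ biprod.snd = 0 ∧ biprod.inr ≫ f ≫ biprod.fst = 0

theorem Biprod.IsDiagonal.eq_biprod_map [HasBinaryBiproducts A] {X₁ X₂ Y₁ Y₂ : A}
    {f : X₁ ⊞ X₂ ⟶ Y₁ ⊞ Y₂} (hf : Biprod.IsDiagonal f) :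
    f = biprod.map (biprod.inl ≫ f ≫ biprod.fst) (biprod.inr ≫ f ≫ biprod.snd) := by
  ext <;> simp [hf.1, hf.2]

end Biproducts

end CategoryTheory

namespace HomologicalComplex

variable {A : Type u} [Category.{v} A] [Preadditive A] {ι : Type*} {c : ComplexShape ι}

section DiagonalSplitting

variable [HasBinaryBiproducts A] (K : HomologicalComplex A c) {Y Z : ι → A}
  (φ : ∀ j, K.X j ≅ Y j ⊞ Z j)
  (hφ : ∀ j k, c.Rel j k → Biprod.IsDiagonal ((φ j).inv ≫ K.d j k ≫ (φ k).hom))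

include hφ in
theorem d_eq_biprod_map_of_isDiagonal (j k : ι) :
    K.d j k = (φ j).hom ≫ biprod.map
      (biprod.inl ≫ (φ j).inv ≫ K.d j k ≫ (φ k).hom ≫ biprod.fst)
      (biprod.inr ≫ (φ j).inv ≫ K.d j k ≫ (φ k).hom ≫ biprod.snd) ≫ (φ k).inv := by
  by_cases hjk : c.Rel j k
  · have := (hφ j k hjk).eq_biprod_map
    simp only [Category.assoc] at this
    rw [← this]
    simp
  · simp [K.shape j k hjk, biprod.map_eq]

-- Reducible, so that `simp` sees through `(K.fstSummand φ hφ).X j = Y j`.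
noncomputable abbrev fstSummand : HomologicalComplex A c where
  X := Y
  d j k := biprod.inl ≫ (φ j).inv ≫ K.d j k ≫ (φ k).hom ≫ biprod.fst
  shape j k h := by simp [K.shape j k h]
  d_comp_d' j k l _ _ := by
    have h := congr(biprod.inl ≫ (φ j).inv ≫ $(K.d_comp_d j k l) ≫ (φ l).hom ≫ biprod.fst)
    rw [d_eq_biprod_map_of_isDiagonal K φ hφ j k,
      d_eq_biprod_map_of_isDiagonal K φ hφ k l] at h
    simpa using h

noncomputable abbrev sndSummand : HomologicalComplex A c where
  X := Z
  d j k := biprod.inr ≫ (φ j).inv ≫ K.d j k ≫ (φ k).hom ≫ biprod.snd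
  shape j k h := by simp [K.shape j k h]
  d_comp_d' j k l _ _ := by
    have h := congr(biprod.inr ≫ (φ j).inv ≫ $(K.d_comp_d j k l) ≫ (φ l).hom ≫ biprod.snd)
    rw [d_eq_biprod_map_of_isDiagonal K φ hφ j k,
      d_eq_biprod_map_of_isDiagonal K φ hφ k l] at h
    simpa using h

noncomputable abbrev binaryBiconeOfDiagonal :
    BinaryBicone (K.fstSummand φ hφ) (K.sndSummand φ hφ) where
  pt := K
  fst.f j := (φ j).hom ≫ biprod.fst
  fst.comm' j k _ := by (conv_rhs => rw [d_eq_biprod_map_of_isDiagonal K φ hφ j k]); simp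
  snd.f j := (φ j).hom ≫ biprod.snd
  snd.comm' j k _ := by (conv_rhs => rw [d_eq_biprod_map_of_isDiagonal K φ hφ j k]); simp
  inl.f j := biprod.inl ≫ (φ j).inv
  inl.comm' j k _ := by (conv_lhs => rw [d_eq_biprod_map_of_isDiagonal K φ hφ j k]); simp
  inr.f j := biprod.inr ≫ (φ j).inv
  inr.comm' j k _ := by (conv_lhs => rw [d_eq_biprod_map_of_isDiagonal K φ hφ j k]); simp
  inl_fst := by ext; simp
  inl_snd := by ext; simp
  inr_fst := by ext; simp
  inr_snd := by ext; simp

noncomputable def isoBiprodOfDiagonal : K ≅ K.fstSummand φ hφ ⊞ K.sndSummand φ hφ :=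
  biprod.uniqueUpToIso _ _ (isBinaryBilimitOfTotal (K.binaryBiconeOfDiagonal φ hφ) (by
    ext j
    have h := congr((φ j).hom ≫ $(biprod.total (X := Y j) (Y := Z j)) ≫ (φ j).inv)
    simp only [Preadditive.add_comp, Preadditive.comp_add, Category.assoc, Category.id_comp,
      Iso.hom_inv_id] at h
    simpa using h))

end DiagonalSplitting

open scoped Classical in
noncomputable def homotopyIdZeroOfIsIsoD (K : HomologicalComplex A c) {i₀ i₁ : ι}
    (h₀₁ : c.Rel i₀ i₁) (hne : i₀ ≠ i₁) [IsIso (K.d i₀ i₁)]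
    (hK : ∀ j, j ≠ i₀ → j ≠ i₁ → IsZero (K.X j)) : Homotopy (𝟙 K) 0 where
  hom j k :=
    if h : j = i₁ ∧ k = i₀ then
      eqToHom (congrArg K.X h.1) ≫ inv (K.d i₀ i₁) ≫ eqToHom (congrArg K.X h.2.symm)
    else 0
  zero j k hjk := dif_neg (by rintro ⟨rfl, rfl⟩; exact hjk h₀₁)
  comm j := by
    by_cases h₀ : j = i₀
    · subst h₀
      simp [dNext_eq _ h₀₁, hne, prevD]
    · by_cases h₁ : j = i₁
      · subst h₁
        simp [prevD_eq _ h₀₁, h₀, dNext]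
      · exact (hK j h₀ h₁).eq_of_src _ _

end HomologicalComplex

noncomputable def HomotopyEquiv.biprodFstOfHomotopyIdZero {A : Type u} [Category.{v} A]
    [Preadditive A] [HasBinaryBiproducts A] {ι : Type*} {c : ComplexShape ι}
    {K L : HomologicalComplex A c} (h : Homotopy (𝟙 L) 0) : HomotopyEquiv (K ⊞ L) K where
  hom := biprod.fst
  inv := biprod.inl
  homotopyHomInvId := by
    have hL : Homotopy (biprod.snd ≫ biprod.inr : K ⊞ L ⟶ K ⊞ L) 0 := by
      simpa using (h.compRight biprod.inr).compLeft biprod.snd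
    simpa using (Homotopy.refl (biprod.fst ≫ biprod.inl : K ⊞ L ⟶ K ⊞ L)).add hL.symm
  homotopyInvHomId := Homotopy.ofEq biprod.inl_fst
namespace GaussianElimination

open ZeroObject

-- The terms of `C''` (`M ⟶ M` in degrees `i`, `i + 1`) and of `C'` in the statement.

section Objects

variable {A : Type u} [Category.{v} A]

section

variable [HasZeroObject A]

noncomputable def cancelledX (i : ℤ) (M : A) (j : ℤ) : A :=
  if j = i then M else if j = i + 1 then M else 0

theorem cancelledX_self (i : ℤ) (M : A) : cancelledX i M i = M := if_pos rfl

theorem cancelledX_succ (i : ℤ) (M : A) : cancelledX i M (i + 1) = M := by simp [cancelledX]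

theorem isZero_cancelledX (i : ℤ) (M : A) {j : ℤ} (h₀ : j ≠ i) (h₁ : j ≠ i + 1) :
    IsZero (cancelledX i M j) := by
  simpa [cancelledX, h₀, h₁] using isZero_zero A

end

variable [HasZeroMorphisms A]

def reducedX (C : CochainComplex A ℤ) (i : ℤ) (B₀ B₁ : A) (j : ℤ) : A :=
  if j = i then B₀ else if j = i + 1 then B₁ else C.X j

theorem reducedX_self (C : CochainComplex A ℤ) (i : ℤ) (B₀ B₁ : A) : reducedX C i B₀ B₁ i = B₀ :=
  if_pos rfl

theorem reducedX_succ (C : CochainComplex A ℤ) (i : ℤ) (B₀ B₁ : A) :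
    reducedX C i B₀ B₁ (i + 1) = B₁ := by simp [reducedX]

theorem reducedX_of_ne (C : CochainComplex A ℤ) (i : ℤ) (B₀ B₁ : A) {j : ℤ} (h₀ : j ≠ i)
    (h₁ : j ≠ i + 1) : reducedX C i B₀ B₁ j = C.X j := by
  simp [reducedX, h₀, h₁]

end Objects

variable {A : Type u} [Category.{v} A] [Preadditive A] [HasFiniteBiproducts A]
  (C : CochainComplex A ℤ) (i : ℤ) {M B₀ B₁ : A} (U : C.X i ≅ M ⊞ B₀)
  (V : C.X (i + 1) ≅ M ⊞ B₁)

noncomputable def splitting (j : ℤ) : C.X j ≅ cancelledX i M j ⊞ reducedX C i B₀ B₁ j :=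
  if h₀ : j = i then
    eqToIso (congrArg C.X h₀) ≪≫ U ≪≫
      biprod.mapIso (eqToIso (by simp [cancelledX, h₀])) (eqToIso (by simp [reducedX, h₀]))
  else if h₁ : j = i + 1 then
    eqToIso (congrArg C.X h₁) ≪≫ V ≪≫
      biprod.mapIso (eqToIso (by simp [cancelledX, h₁])) (eqToIso (by simp [reducedX, h₁]))
  else
    eqToIso (reducedX_of_ne C i B₀ B₁ h₀ h₁).symm ≪≫ isoZeroBiprod (isZero_cancelledX i M h₀ h₁)

theorem splitting_of_ne {j : ℤ} (h₀ : j ≠ i) (h₁ : j ≠ i + 1) :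
    splitting C i U V j = eqToIso (reducedX_of_ne C i B₀ B₁ h₀ h₁).symm ≪≫
      isoZeroBiprod (isZero_cancelledX i M h₀ h₁) := by
  rw [splitting, dif_neg h₀, dif_neg h₁]

variable {g : B₀ ⟶ B₁} (hUV : U.inv ≫ C.d i (i + 1) ≫ V.hom = biprod.map (𝟙 M) g)

include hUV

theorem d_comp_hom_fst (j : ℤ) : C.d j i ≫ U.hom ≫ biprod.fst = 0 := by
  simpa using congr(C.d j i ≫ U.hom ≫ $(hUV) ≫ biprod.fst).symm

theorem inl_comp_inv_d (k : ℤ) : biprod.inl ≫ V.inv ≫ C.d (i + 1) k = 0 := by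
  simpa using congr(biprod.inl ≫ $(hUV) ≫ V.inv ≫ C.d (i + 1) k).symm

theorem isDiagonal_splitting (j k : ℤ) (hjk : (ComplexShape.up ℤ).Rel j k) :
    Biprod.IsDiagonal ((splitting C i U V j).inv ≫ C.d j k ≫ (splitting C i U V k).hom) := by
  obtain rfl : j + 1 = k := hjk
  constructor
  · by_cases h₀ : j = i
    · subst h₀
      simp [splitting, reassoc_of% hUV]
    by_cases h₁ : j = i + 1
    · subst h₁
      simp [splitting, reassoc_of% (inl_comp_inv_d C i U V hUV)]
    exact (isZero_cancelledX i M h₀ h₁).eq_of_src _ _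
  · by_cases h₀ : j + 1 = i
    · subst h₀
      rw [splitting_of_ne C (j + 1) U V (by omega) (by omega)]
      simp [splitting, reassoc_of% (d_comp_hom_fst C (j + 1) U V hUV j)]
    by_cases h₁ : j = i
    · subst h₁
      simp [splitting, reassoc_of% hUV]
    exact (isZero_cancelledX i M h₀ (by omega)).eq_of_tgt _ _

theorem fstSummand_splitting_d_self :
    (C.fstSummand (splitting C i U V) (isDiagonal_splitting C i U V hUV)).d i (i + 1) =
      eqToHom ((cancelledX_self i M).trans (cancelledX_succ i M).symm) := by
  simp [splitting, reassoc_of% hUV]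

end GaussianElimination

open GaussianElimination in
/-- Gaussian elimination: if some differential of a complex `C` over a Krull–Schmidt category
does not lie in the radical, then `C` splits off a two-term contractible complex
`⋯ → 0 → M → M → 0 → ⋯` on an indecomposable object `M`. -/
theorem gaussian_elimination
    {A : Type u} [Category.{v} A] [Preadditive A] [HasFiniteBiproducts A]
    (hKS : CategoryTheory.IsKrullSchmidt A)
    (C : CochainComplex A ℤ) (i : ℤ)
    (hd : ¬ CategoryTheory.InRadical (C.d i (i + 1))) :
    ∃ (M Bi Bi1 : A) (C' C'' : CochainComplex A ℤ) (_ : C ≅ C' ⊞ C''),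
      Indecomposable M ∧
      Nonempty (C.X i ≅ Bi ⊞ M) ∧ Nonempty (C.X (i + 1) ≅ Bi1 ⊞ M) ∧
      C'.X i = Bi ∧ C'.X (i + 1) = Bi1 ∧
      (∀ j : ℤ, j ≠ i → j ≠ i + 1 → C'.X j = C.X j) ∧
      (∃ (h1 : C''.X i = M) (h2 : C''.X (i + 1) = M),
        C''.d i (i + 1) = CategoryTheory.eqToHom (h1.trans h2.symm)) ∧
      (∀ j : ℤ, j ≠ i → j ≠ i + 1 → IsZero (C''.X j)) ∧
      Nonempty (HomotopyEquiv C C') := by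
  obtain ⟨M, B₀, B₁, U, V, g, hM, hUV⟩ := exists_iso_biprod_diagonal_of_not_inRadical hKS hd
  have hφ := isDiagonal_splitting C i U V hUV
  have hd'' := fstSummand_splitting_d_self C i U V hUV
  have : IsIso ((C.fstSummand _ hφ).d i (i + 1)) := by rw [hd'']; infer_instance
  let e : C ≅ C.sndSummand _ hφ ⊞ C.fstSummand _ hφ :=
    C.isoBiprodOfDiagonal _ hφ ≪≫ biprod.braiding _ _
  have hC'' : Homotopy (𝟙 (C.fstSummand _ hφ)) 0 :=
    (C.fstSummand _ hφ).homotopyIdZeroOfIsIsoD (by simp) (by omega)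
      fun _ => isZero_cancelledX i M
  exact ⟨M, B₀, B₁, _, _, e, indecomposable_of_isLocalRing, ⟨U ≪≫ biprod.braiding _ _⟩,
    ⟨V ≪≫ biprod.braiding _ _⟩, reducedX_self C i B₀ B₁, reducedX_succ C i B₀ B₁,
    fun _ => reducedX_of_ne C i B₀ B₁, ⟨cancelledX_self i M, cancelledX_succ i M, hd''⟩,
    fun _ => isZero_cancelledX i M,
    ⟨(HomotopyEquiv.ofIso e).trans (HomotopyEquiv.biprodFstOfHomotopyIdZero hC'')⟩⟩
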